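/- arXiv:1110.6555 — 3 statements merged into one kernel-verified Lean document; each statement's English description precedes it below -/
import Mathlib

section
/- Loeb's lemma: Let X and Y be sets with families ⟨U_i⟩_{i ∈ I} of subsets of X and ⟨V_j⟩_{j ∈ J} of subsets of Y, with ⟨U_i⟩ compact in the sense that every cover of X by sets U_i, i ∈ A ⊆ I, has a finite subcover, and such that for each x there is an i with x ∈ U_i. Let A ⊆ I × J be a set such that no finite subset a ⊆ A satisfies X × Y = ⋃_{(i,j) ∈ a} U_i × V_j. Then there exists x ∈ X such that, setting B = {j ∈ J : ∃ i, x ∈ U_i and (i,j) ∈ A}, no finite subset b ⊆ B satisfies Y = ⋃_{j ∈ b} V_j. -/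
/-!
If the conclusion failed, every `x` would have finitely many `V_j`, `j ∈ B_x`, covering `Y`;
intersecting the corresponding `U_i ∋ x` and refining by the base property yields a `U_k ∋ x`
such that `U_k × Y` is covered by finitely many rectangles from `A`. Compactness picks finitely
many such `U_k` covering `X`, and their rectangles together cover `X × Y`.
-/

open Set

section Loeb

variable {X Y I J : Type*} (U : I → Set X) (V : J → Set Y)

theorem exists_mem_subset_biInter_of_base
    (hbase : ∀ (x : X) (i i' : I), x ∈ U i ∩ U i' → ∃ k : I, x ∈ U k ∧ U k ⊆ U i ∩ U i')
    {x : X} {s : Finset I} (hs : s.Nonempty) (hx : ∀ i ∈ s, x ∈ U i) :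
    ∃ k, x ∈ U k ∧ U k ⊆ ⋂ i ∈ s, U i := by
  induction hs using Finset.Nonempty.cons_induction with
  | singleton i => exact ⟨i, hx i (Finset.mem_singleton_self i), by simp⟩
  | cons i s hi _ ih =>
    obtain ⟨k, hxk, hks⟩ := ih fun i' hi' => hx i' (Finset.mem_cons_of_mem hi')
    obtain ⟨k', hxk', hk'⟩ :=
      hbase x i k ⟨hx i (Finset.mem_cons_self i s), hxk⟩
    refine ⟨k', hxk', subset_iInter₂ fun i' hi' => ?_⟩
    rcases Finset.mem_cons.mp hi' with rfl | hi'
    · exact hk'.trans inter_subset_left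
    · exact hk'.trans (inter_subset_right.trans (hks.trans (iInter₂_subset i' hi')))

def HasFiniteRectCover (A : Set (I × J)) (i : I) : Prop :=
  ∃ s : Finset (I × J), ↑s ⊆ A ∧ U i ×ˢ univ ⊆ ⋃ p ∈ s, U p.1 ×ˢ V p.2

theorem exists_hasFiniteRectCover_of_iUnion_eq_univ
    (hbase : ∀ (x : X) (i i' : I), x ∈ U i ∩ U i' → ∃ k : I, x ∈ U k ∧ U k ⊆ U i ∩ U i')
    [Nonempty Y] {A : Set (I × J)} {x : X} {b : Finset J}
    (hbA : ↑b ⊆ {j : J | ∃ i : I, x ∈ U i ∧ (i, j) ∈ A}) (hb : ⋃ j ∈ b, V j = univ) :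
    ∃ i, x ∈ U i ∧ HasFiniteRectCover U V A i := by
  classical
  have hb_ne : b.Nonempty := by
    by_contra h
    rw [Finset.not_nonempty_iff_eq_empty.mp h] at hb
    exact empty_ne_univ (by simpa using hb)
  have hbA : ∀ j ∈ b, ∃ i, x ∈ U i ∧ (i, j) ∈ A := hbA
  have : Nonempty I := let ⟨j, hj⟩ := hb_ne; ⟨(hbA j hj).choose⟩
  choose! g hxg hgA using hbA
  obtain ⟨k, hxk, hk⟩ := exists_mem_subset_biInter_of_base U hbase (hb_ne.image g)
    (by simpa using hxg)
  refine ⟨k, hxk, b.image fun j => (g j, j), ?_, ?_⟩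
  · rw [Finset.coe_image, image_subset_iff]
    exact hgA
  rintro ⟨x', y⟩ ⟨hx', -⟩
  obtain ⟨j, hj, hy⟩ := mem_iUnion₂.mp (hb.symm ▸ mem_univ y : y ∈ ⋃ j ∈ b, V j)
  have hx'j : x' ∈ U (g j) := mem_iInter₂.mp (hk hx') (g j) (Finset.mem_image_of_mem g hj)
  exact mem_iUnion₂.mpr ⟨(g j, j), Finset.mem_image_of_mem _ hj, hx'j, hy⟩

theorem exists_finite_rect_cover_of_forall_hasFiniteRectCover
    (hcomp : ∀ A : Set I, (⋃ i ∈ A, U i) = Set.univ →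
      ∃ a : Finset I, ↑a ⊆ A ∧ (⋃ i ∈ a, U i) = Set.univ)
    {A : Set (I × J)} (h : ∀ x, ∃ i, x ∈ U i ∧ HasFiniteRectCover U V A i) :
    ∃ s : Finset (I × J), ↑s ⊆ A ∧ ⋃ p ∈ s, U p.1 ×ˢ V p.2 = univ := by
  classical
  obtain ⟨a, haG, ha⟩ := hcomp {i | HasFiniteRectCover U V A i}
    (eq_univ_of_forall fun x => by simpa [and_comm] using h x)
  have haG : ∀ i ∈ a, HasFiniteRectCover U V A i := haG
  choose! s hsA hs using haG
  refine ⟨a.biUnion s, by simpa using hsA, eq_univ_of_forall ?_⟩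
  rintro ⟨x, y⟩
  obtain ⟨i, hi, hx⟩ := mem_iUnion₂.mp (ha.symm ▸ mem_univ x : x ∈ ⋃ i ∈ a, U i)
  obtain ⟨p, hp, hxy⟩ := mem_iUnion₂.mp (hs i hi (mk_mem_prod hx (mem_univ y)))
  exact mem_iUnion₂.mpr ⟨p, Finset.mem_biUnion.mpr ⟨i, hi, hp⟩, hxy⟩

end Loeb

theorem stmt14_general {X Y I J : Type*} (U : I → Set X) (V : J → Set Y)
    (hbase : ∀ (x : X) (i i' : I), x ∈ U i ∩ U i' → ∃ k : I, x ∈ U k ∧ U k ⊆ U i ∩ U i')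
    (hcomp : ∀ A : Set I, (⋃ i ∈ A, U i) = Set.univ →
      ∃ a : Finset I, ↑a ⊆ A ∧ (⋃ i ∈ a, U i) = Set.univ)
    (A : Set (I × J))
    (hA : ∀ a : Finset (I × J), ↑a ⊆ A → (⋃ p ∈ a, U p.1 ×ˢ V p.2) ≠ Set.univ) :
    ∃ x : X, ∀ b : Finset J,
      (↑b ⊆ {j : J | ∃ i : I, x ∈ U i ∧ (i, j) ∈ A}) → (⋃ j ∈ b, V j) ≠ Set.univ := by
  by_contra! h
  have : Nonempty Y := by
    by_contra hY
    have : IsEmpty (X × Y) := isEmpty_prod.mpr (.inr (not_nonempty_iff.mp hY))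
    exact hA ∅ (by simp) (by simp [univ_eq_empty_iff.mpr this])
  obtain ⟨s, hsA, hs⟩ := exists_finite_rect_cover_of_forall_hasFiniteRectCover U V hcomp
    fun x => by
      obtain ⟨b, hbA, hb⟩ := h x
      exact exists_hasFiniteRectCover_of_iUnion_eq_univ U V hbase hbA hb
  exact hA s hsA hs

/-- Loeb's lemma: if `⟨U_i⟩` is a compact base-like family on `X` and `A ⊆ I × J`
indexes rectangles with no finite subfamily covering `X × Y`, then there is `x ∈ X`
such that no finite subfamily of `{V_j : ∃ i, x ∈ U i ∧ (i,j) ∈ A}` covers `Y`. -/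
theorem stmt14 {X Y I J : Type*} (U : I → Set X) (V : J → Set Y)
    (hcov : ∀ x : X, ∃ i : I, x ∈ U i)
    (hbase : ∀ (x : X) (i i' : I), x ∈ U i ∩ U i' → ∃ k : I, x ∈ U k ∧ U k ⊆ U i ∩ U i')
    (hcomp : ∀ A : Set I, (⋃ i ∈ A, U i) = Set.univ →
      ∃ a : Finset I, ↑a ⊆ A ∧ (⋃ i ∈ a, U i) = Set.univ)
    (A : Set (I × J))
    (hA : ∀ a : Finset (I × J), ↑a ⊆ A → (⋃ p ∈ a, U p.1 ×ˢ V p.2) ≠ Set.univ) :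
    ∃ x : X, ∀ b : Finset J,
      (↑b ⊆ {j : J | ∃ i : I, x ∈ U i ∧ (i, j) ∈ A}) → (⋃ j ∈ b, V j) ≠ Set.univ :=
  stmt14_general U V hbase hcomp A hA
end

section
/- Let T be a subtree of the full binary tree {0,1}^{<ω} with no infinite branches, let X be the set of dead-ends of T (nodes of T with no extension in T), and for each t ∈ T let B_t = {x ∈ X : t is not an initial segment of x}. Then: (1) the family ⟨B_t⟩_{t ∈ T} is compact, i.e., if X = ⋃_{t ∈ A} B_t for some A ⊆ T then finitely many B_t, t ∈ A, already cover X; and (2) each singleton {x} for x ∈ X is a finite intersection of sets B_t, namely {x} = ⋂_{t ∈ b_x} B_t where b_x = {(x↾i)⌢(1−x(i)) : i < |x|} ∩ T. -/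
/-! By Kőnig's lemma a prefix-closed set of binary strings without an infinite branch is
finite, so there are only finitely many dead-ends and every cover of them has a finite
subcover. For the singletons: two distinct dead-ends `x`, `y` are incomparable under `<+:`,
so `y` extends a sibling `(x↾i)⌢(1 - x(i))` of `x`, which lies in `T` by prefix-closure. -/

theorem Set.Finite.exists_finset_subset_biUnion {α ι : Type*} {s : Set α} (hs : s.Finite)
    {A : Set ι} {t : ι → Set α} (h : s ⊆ ⋃ i ∈ A, t i) :
    ∃ a : Finset ι, ↑a ⊆ A ∧ s ⊆ ⋃ i ∈ a, t i := by
  obtain ⟨I, hIfin, hI⟩ := Set.finite_subset_iUnion hs h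
  refine ⟨(hIfin.inter_of_left A).toFinset, fun i hi => by simp_all, fun x hx => ?_⟩
  obtain ⟨i, hiA, hiI, hxi⟩ : ∃ i ∈ A, i ∈ I ∧ x ∈ t i := by simpa using hI hx
  exact Set.mem_biUnion (by simp [hiI, hiA]) hxi

def PrefixClosed {α : Type*} (T : Set (List α)) : Prop :=
  ∀ t ∈ T, ∀ u : List α, u <+: t → u ∈ T

namespace PrefixClosed

variable {α : Type*} {T : Set (List α)}

theorem exists_mem_length_eq [Finite α] (hT : PrefixClosed T) (hinf : T.Infinite) (n : ℕ) :
    ∃ l ∈ T, l.length = n := by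
  obtain ⟨l, hl, hln⟩ := (hinf.sdiff (List.finite_length_lt α n)).nonempty
  exact ⟨l.take n, hT l hl _ (List.take_prefix _ _), by simp_all⟩

theorem finite_of_not_exists_branch [Finite α] (hT : PrefixClosed T)
    (hbranch : ¬ ∃ g : ℕ → α, ∀ n : ℕ, (List.ofFn fun k : Fin n => g k) ∈ T) : T.Finite := by
  by_contra hinf
  let level (n : ℕ) := {v : Fin n → α // List.ofFn v ∈ T}
  have (n : ℕ) : Nonempty (level n) := by
    obtain ⟨l, hl, rfl⟩ := hT.exists_mem_length_eq hinf n
    exact ⟨⟨fun i => l[i.1], by rwa [List.ofFn_getElem]⟩⟩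
  let restrict {m n : ℕ} (h : m ≤ n) (v : level n) : level m :=
    ⟨Fin.take m h v.1, by
      rw [Fin.ofFn_take_eq_take_ofFn]; exact hT _ v.2 _ (List.take_prefix _ _)⟩
  obtain ⟨f, hf⟩ := exists_seq_forall_proj_of_forall_finite restrict
    (fun _ _ => rfl) (fun _ _ _ _ _ _ => by simp [restrict, Fin.take_take])
    (fun _ _ => Set.toFinite _)
  refine hbranch ⟨fun n => (f (n + 1)).1 (Fin.last n), fun n => ?_⟩
  convert (f n).2 using 2
  funext k
  show (f (k + 1)).1 (Fin.last k) = _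
  rw [← hf (k.2 : k.1 + 1 ≤ n)]
  rfl

end PrefixClosed

namespace List

def flipAt (x : List Bool) (i : ℕ) : List Bool := x.take i ++ [!x.getD i false]

theorem not_flipAt_prefix : ∀ {x : List Bool} {i : ℕ}, i < x.length → ¬ x.flipAt i <+: x
  | a :: x, 0, _ => by simp [flipAt]
  | a :: x, i + 1, hi => by
    simpa [flipAt] using not_flipAt_prefix (x := x) (by simpa using hi)

theorem exists_flipAt_prefix_of_not_prefix :
    ∀ {x y : List Bool}, ¬ x <+: y → ¬ y <+: x → ∃ i < x.length, x.flipAt i <+: y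
  | [], _, hxy, _ => absurd nil_prefix hxy
  | _ :: _, [], _, hyx => absurd nil_prefix hyx
  | a :: x, b :: y, hxy, hyx => by
    by_cases hab : a = b
    · subst hab
      obtain ⟨i, hi, hpre⟩ := exists_flipAt_prefix_of_not_prefix (x := x) (y := y)
        (by simpa using hxy) (by simpa using hyx)
      exact ⟨i + 1, by simpa using hi, by simpa [flipAt] using hpre⟩
    · exact ⟨0, by simp, by cases a <;> cases b <;> simp_all [flipAt]⟩

end List

def deadEnds {α : Type*} (T : Set (List α)) : Set (List α) :=
  {x ∈ T | ∀ u ∈ T, x <+: u → u = x}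

theorem PrefixClosed.singleton_eq_deadEnds_inter_biInter {T : Set (List Bool)}
    (hT : PrefixClosed T) {x : List Bool} (hx : x ∈ deadEnds T) :
    {x} = deadEnds T ∩ ⋂ t ∈ {t | t ∈ T ∧ ∃ i < x.length, t = x.flipAt i},
      {y ∈ deadEnds T | ¬ t <+: y} := by
  ext y
  simp only [Set.mem_singleton_iff, Set.mem_inter_iff, Set.mem_iInter₂, Set.mem_ofPred_eq]
  constructor
  · rintro rfl
    exact ⟨hx, fun t ⟨_, i, hi, ht⟩ => ⟨hx, ht ▸ List.not_flipAt_prefix hi⟩⟩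
  · rintro ⟨hy, hsep⟩
    by_cases hxy : x <+: y
    · exact hx.2 y hy.1 hxy
    by_cases hyx : y <+: x
    · exact (hy.2 x hx.1 hyx).symm
    obtain ⟨i, hi, hpre⟩ := List.exists_flipAt_prefix_of_not_prefix hxy hyx
    exact absurd hpre (hsep _ ⟨hT _ hy.1 _ hpre, i, hi, rfl⟩).2

/-- For a well-founded binary tree `T` with set of dead-ends `X` and subbasic sets
`B t = {x ∈ X : ¬ t ⊑ x}`: (1) the family `⟨B t⟩_{t ∈ T}` is compact, and (2) each
singleton `{x}` for `x ∈ X` is the intersection over the siblings of `x` in `T`. -/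
theorem stmt18 (T : Set (List Bool))
    (htree : ∀ t ∈ T, ∀ u : List Bool, u <+: t → u ∈ T)
    (hwf : ¬ ∃ g : ℕ → Bool, ∀ n : ℕ, (List.ofFn fun k : Fin n => g k) ∈ T) :
    (∀ A : Set (List Bool), A ⊆ T →
        ({x ∈ T | ∀ u ∈ T, x <+: u → u = x} ⊆
          ⋃ t ∈ A, {x ∈ {x ∈ T | ∀ u ∈ T, x <+: u → u = x} | ¬ t <+: x}) →
        ∃ a : Finset (List Bool), ↑a ⊆ A ∧
          {x ∈ T | ∀ u ∈ T, x <+: u → u = x} ⊆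
            ⋃ t ∈ a, {x ∈ {x ∈ T | ∀ u ∈ T, x <+: u → u = x} | ¬ t <+: x}) ∧
    (∀ x ∈ {x ∈ T | ∀ u ∈ T, x <+: u → u = x},
      ({x} : Set (List Bool)) =
        {x ∈ T | ∀ u ∈ T, x <+: u → u = x} ∩
          ⋂ t ∈ {t | t ∈ T ∧ ∃ i < x.length, t = x.take i ++ [!x.getD i false]},
            {x ∈ {x ∈ T | ∀ u ∈ T, x <+: u → u = x} | ¬ t <+: x}) := by
  have hT : PrefixClosed T := htree
  have hX : (deadEnds T).Finite := (hT.finite_of_not_exists_branch hwf).subset fun _ hx => hx.1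
  exact ⟨fun _ _ hcover => hX.exists_finset_subset_biUnion hcover,
    fun _ hx => hT.singleton_eq_deadEnds_inter_biInter hx⟩
end

section
/- Deficiency sets are hypersimple (classical computability version): let f : ℕ → ℕ be an injective computable function whose range is not computable, and let D_f = {x : ∃ y > x, f(y) < f(x)} be its deficiency set. Then D_f is computably enumerable, coinfinite, and hypersimple: there is no computable sequence ⟨d_n⟩ of pairwise disjoint finite sets (given by canonical indices) such that d_n ⊄ D_f for every n — equivalently, for every computable disjoint strong array ⟨d_n⟩ there is some n with d_n ⊆ D_f. -/
/-!
If a disjoint strong array `⟨d n⟩` had a non-deficient element `x ∈ d n` for every `n`, then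
`range f` would be decidable. By injectivity and disjointness, for every `y` some block `d n`
has all its `f`-values `≥ y`, and such an `n` can be found by search. A non-deficient `x` in
that block satisfies `y ≤ f x`, so any preimage of `y` lies below `x`; hence
`y ∈ range f ↔ ∃ x ∈ d n, ∃ z ≤ x, f z = y`, a bounded search.
-/

namespace ComputablePred

variable {α β : Type*} [Primcodable α] [Primcodable β]

theorem comp {p : β → Prop} {g : α → β} (hp : ComputablePred p) (hg : Computable g) :
    ComputablePred fun a => p (g a) :=
  let ⟨_, hp⟩ := hp
  ⟨fun a => inferInstanceAs (Decidable (p (g a))), hp.comp hg⟩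

protected theorem and {p q : α → Prop} (hp : ComputablePred p) (hq : ComputablePred q) :
    ComputablePred fun a => p a ∧ q a := by
  obtain ⟨_, hp⟩ := hp
  obtain ⟨_, hq⟩ := hq
  exact Computable.computablePred ((Primrec.and.to_comp.comp hp hq).of_eq fun a => by simp)

theorem exists_lt {p : α → ℕ → Prop} (hp : ComputablePred fun q : α × ℕ => p q.1 q.2) :
    ComputablePred fun q : α × ℕ => ∃ x < q.2, p q.1 x := by
  classical
  have hrec : Computable fun q : α × ℕ =>
      Nat.rec (motive := fun _ => Bool) false (fun x b => b || decide (p q.1 x)) q.2 :=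
    Computable.nat_rec Computable.snd (Computable.const false)
      (Primrec.or.to_comp.comp (Computable.snd.comp Computable.snd)
        (hp.decide.comp ((Computable.fst.comp Computable.fst).pair
          (Computable.fst.comp Computable.snd)))).to₂
  refine Computable.computablePred (hrec.of_eq fun ⟨a, n⟩ => ?_)
  induction n with
  | zero => simp
  | succ n ih =>
    change (_ || decide (p a n)) = _
    simp only [ih, Nat.exists_lt_succ_right, Bool.decide_or]

theorem exists_mem_list [Inhabited β] {l : α → List β} {p : α → β → Prop} (hl : Computable l)
    (hp : ComputablePred fun q : α × β => p q.1 q.2) :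
    ComputablePred fun a => ∃ x ∈ l a, p a x := by
  have hgetI : ComputablePred fun q : α × ℕ => p q.1 ((l q.1).getI q.2) :=
    hp.comp (Computable.fst.pair
      (Primrec.list_getI.to_comp.comp (hl.comp Computable.fst) Computable.snd))
  refine ((exists_lt (p := fun a i => p a ((l a).getI i)) hgetI).comp
    (Computable.id.pair (Computable.list_length.comp hl))).of_eq fun a => ?_
  simp only [List.exists_mem_iff_getElem]
  exact exists_congr fun i => ⟨fun ⟨hi, h⟩ => ⟨hi, List.getI_eq_getElem _ hi ▸ h⟩,
    fun ⟨hi, h⟩ => ⟨hi, (List.getI_eq_getElem _ hi).symm ▸ h⟩⟩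

theorem forall_mem_list [Inhabited β] {l : α → List β} {p : α → β → Prop} (hl : Computable l)
    (hp : ComputablePred fun q : α × β => p q.1 q.2) :
    ComputablePred fun a => ∀ x ∈ l a, p a x :=
  (exists_mem_list (p := fun a x => ¬p a x) hl hp.not).not.of_eq fun a => by simp

theorem exists_re {p : α → ℕ → Prop} (hp : ComputablePred fun q : α × ℕ => p q.1 q.2) :
    REPred fun a => ∃ n, p a n := by
  classical
  refine (Partrec.rfind hp.decide.to₂.partrec₂).dom_re.of_eq fun a => ?_
  simp [Nat.rfind_dom]

end ComputablePred

theorem PrimrecRel.computablePred_comp {α β γ : Type*} [Primcodable α] [Primcodable β]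
    [Primcodable γ] {R : β → γ → Prop} {f : α → β} {g : α → γ} (hR : PrimrecRel R)
    (hf : Computable f) (hg : Computable g) : ComputablePred fun a => R (f a) (g a) :=
  let ⟨_i, hR⟩ := hR
  ⟨fun a => _i (f a, g a), hR.to_comp.comp (hf.pair hg)⟩

open Function

def IsDeficient (f : ℕ → ℕ) (x : ℕ) : Prop :=
  ∃ y, x < y ∧ f y < f x

theorem isDeficient_re {f : ℕ → ℕ} (hf : Computable f) : REPred (IsDeficient f) :=
  ComputablePred.exists_re (p := fun x y => x < y ∧ f y < f x)
    ((Primrec.nat_lt.computablePred_comp Computable.fst Computable.snd).and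
      (Primrec.nat_lt.computablePred_comp (hf.comp Computable.snd) (hf.comp Computable.fst)))

theorem exists_not_isDeficient_gt (f : ℕ → ℕ) (a : ℕ) : ∃ x, a < x ∧ ¬IsDeficient f x := by
  classical
  have hval : ∃ v, ∃ x, a < x ∧ f x = v := ⟨_, a + 1, a.lt_succ_self, rfl⟩
  -- `x` minimises `f` on `(a, ∞)`
  obtain ⟨x, hax, hfx⟩ := Nat.find_spec hval
  exact ⟨x, hax, fun ⟨y, hxy, hfy⟩ => Nat.find_min hval (hfx ▸ hfy) ⟨y, hax.trans hxy, rfl⟩⟩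

theorem mem_range_iff_exists_le_of_not_isDeficient {f : ℕ → ℕ} (hinj : Injective f) {x y : ℕ}
    (hx : ¬IsDeficient f x) (hy : y ≤ f x) : y ∈ Set.range f ↔ ∃ z ≤ x, f z = y := by
  refine ⟨?_, fun ⟨z, _, hz⟩ => ⟨z, hz⟩⟩
  rintro ⟨z, rfl⟩
  refine ⟨z, le_of_not_gt fun hxz => ?_, rfl⟩
  rcases hy.lt_or_eq with hlt | heq
  · exact hx ⟨z, hxz, hlt⟩
  · exact hxz.ne (hinj heq).symm

theorem exists_forall_le_apply_of_disjoint {α : Type*} {f : α → ℕ} (hinj : Injective f)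
    {d : ℕ → List α} (hdisj : ∀ m n, m ≠ n → ∀ x ∈ d m, x ∉ d n) (y : ℕ) :
    ∃ n, ∀ x ∈ d n, y ≤ f x := by
  by_contra! h
  choose x hxd hfx using h
  refine not_injective_infinite_finite (fun n => (⟨f (x n), hfx n⟩ : Fin y)) fun m n hmn => ?_
  by_contra hne
  exact hdisj m n hne (x m) (hxd m) (hinj (Fin.val_eq_of_eq hmn) ▸ hxd n)

theorem exists_forall_isDeficient_of_not_computablePred_range {f : ℕ → ℕ} (hf : Computable f)
    (hinj : Injective f) (hrange : ¬ComputablePred (· ∈ Set.range f)) {d : ℕ → List ℕ}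
    (hd : Computable d) (hdisj : ∀ m n, m ≠ n → ∀ x ∈ d m, x ∉ d n) :
    ∃ n, ∀ x ∈ d n, IsDeficient f x := by
  classical
  by_contra! h
  refine hrange ?_
  have hbig := exists_forall_le_apply_of_disjoint hinj hdisj
  have hfind : Computable fun y => Nat.find (hbig y) :=
    Computable.find (ComputablePred.forall_mem_list (p := fun q x => q.1 ≤ f x)
      (hd.comp Computable.snd)
      (Primrec.nat_le.computablePred_comp (Computable.fst.comp Computable.fst)
        (hf.comp Computable.snd))) hbig
  have hpreimage_lt : ComputablePred fun q : ℕ × ℕ => ∃ z < q.2 + 1, f z = q.1 :=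
    (ComputablePred.exists_lt (p := fun y z => f z = y)
      (Primrec.eq.computablePred_comp (hf.comp Computable.snd) Computable.fst)).comp
      (Computable.fst.pair (Computable.succ.comp Computable.snd))
  refine (ComputablePred.exists_mem_list (p := fun y x => ∃ z < x + 1, f z = y)
    (hd.comp hfind) hpreimage_lt).of_eq fun y => ⟨fun ⟨_, _, z, _, hz⟩ => ⟨z, hz⟩, fun hy => ?_⟩
  obtain ⟨x, hxd, hx⟩ := h (Nat.find (hbig y))
  obtain ⟨z, hzx, hz⟩ :=
    (mem_range_iff_exists_le_of_not_isDeficient hinj hx (Nat.find_spec (hbig y) x hxd)).1 hy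
  exact ⟨x, hxd, z, Nat.lt_succ_of_le hzx, hz⟩

/-- The deficiency set of an injective computable function with non-computable range
is c.e., coinfinite, and hypersimple: every computable disjoint strong array has a
member entirely inside the deficiency set. -/
theorem stmt19 (f : ℕ → ℕ) (hf : Computable f) (hinj : Function.Injective f)
    (hrange : ¬ ComputablePred (fun y => y ∈ Set.range f)) :
    REPred (fun x : ℕ => ∃ y : ℕ, x < y ∧ f y < f x) ∧
    {x : ℕ | ¬ ∃ y : ℕ, x < y ∧ f y < f x}.Infinite ∧
    (∀ d : ℕ → List ℕ, Computable d →
      (∀ m n : ℕ, m ≠ n → ∀ x : ℕ, x ∈ d m → x ∉ d n) →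
      ∃ n : ℕ, ∀ x ∈ d n, ∃ y : ℕ, x < y ∧ f y < f x) := by
  refine ⟨isDeficient_re hf, Set.infinite_of_forall_exists_gt fun a => ?_,
    fun d hd hdisj => exists_forall_isDeficient_of_not_computablePred_range hf hinj hrange hd hdisj⟩
  obtain ⟨x, hax, hx⟩ := exists_not_isDeficient_gt f a
  exact ⟨x, hx, hax⟩
end
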